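/- arXiv:2509.21536 — 5 statements merged into one kernel-verified Lean document; each statement's English description precedes it below -/
import Mathlib

section
/- Let V be a linear subspace of polynomials over a finite field F and R ∈ ℕ, and let U_R(V) = Span{X ∈ V : rk(X) < R}. Then every X ∈ V with deg(X) < deg(U_R(V)) satisfies X ∈ U_R(V), where deg(W) = max_{Y ∈ W} deg(Y) for a subspace W. -/
open MvPolynomial
open scoped BigOperators

namespace PaperDefs

variable (F : Type) [Field F] [Fintype F] [DecidableEq F]

/-- A multivariate polynomial is *reduced* if every variable occurs with degree at most `|F| - 1`.
Over a finite field, every function `F^n → F` has a unique reduced polynomial representative. -/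
def ReducedPoly {n : ℕ} (P : MvPolynomial (Fin n) F) : Prop :=
  ∀ i, P.degreeOf i ≤ Fintype.card F - 1

/-- `P` represents the function `f`. -/
def Represents {n : ℕ} (P : MvPolynomial (Fin n) F) (f : (Fin n → F) → F) : Prop :=
  ∀ x, MvPolynomial.eval x P = f x

/-- Degree of a polynomial function: total degree of its (unique) reduced representative. -/
noncomputable def degF {n : ℕ} (f : (Fin n → F) → F) : ℕ :=
  sInf {d | ∃ P : MvPolynomial (Fin n) F, ReducedPoly F P ∧ Represents F P f ∧ P.totalDegree = d}

/-- `f` is a form (homogeneous polynomial function) of degree `d ≥ 1`. -/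
def IsFormOfDegree {n : ℕ} (f : (Fin n → F) → F) (d : ℕ) : Prop :=
  0 < d ∧ ∃ P : MvPolynomial (Fin n) F, P ≠ 0 ∧ ReducedPoly F P ∧
    P.IsHomogeneous d ∧ Represents F P f

/-- `f` is a form: a homogeneous polynomial function of positive degree. -/
def IsForm {n : ℕ} (f : (Fin n → F) → F) : Prop := ∃ d, IsFormOfDegree F f d

/-- A function is non-constant. -/
def NonConstantFn {α β : Type*} (f : α → β) : Prop := ¬ ∃ c, ∀ x, f x = c

/-- A polynomial function is reducible if it is a product of two non-constant polynomial
functions. -/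
def ReduciblePoly {n : ℕ} (f : (Fin n → F) → F) : Prop :=
  ∃ g h : (Fin n → F) → F, NonConstantFn g ∧ NonConstantFn h ∧ ∀ x, f x = g x * h x

/-- Rank of a form of degree `d`: the least `r` such that the form is a sum of `r` reducible
forms of degree `d`; `∞` for `d ≤ 1`. -/
noncomputable def rkFormD {n : ℕ} (d : ℕ) (f : (Fin n → F) → F) : ℕ∞ :=
  if d ≤ 1 then ⊤ else
    sInf {r : ℕ∞ | ∃ k : ℕ, r = (k : ℕ∞) ∧ ∃ R : Fin k → (Fin n → F) → F,
      (∀ i, IsFormOfDegree F (R i) d ∧ ReduciblePoly F (R i)) ∧ ∀ x, f x = ∑ i, R i x}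

/-- Rank of a general polynomial function: the rank of the highest-degree homogeneous part of
its reduced representative (`0` for constants). -/
noncomputable def rkFun {n : ℕ} (f : (Fin n → F) → F) : ℕ∞ :=
  sInf {r : ℕ∞ | ∃ P : MvPolynomial (Fin n) F, ReducedPoly F P ∧ Represents F P f ∧
    r = if P.totalDegree = 0 then 0 else
      rkFormD F P.totalDegree
        (fun x => MvPolynomial.eval x ((MvPolynomial.homogeneousComponent P.totalDegree) P))}

/-- `U_R(V)`: the span of the polynomials in `V` of rank less than `R`. -/
noncomputable def lowRankSpan {n : ℕ} (V : Submodule F ((Fin n → F) → F)) (R : ℕ) :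
    Submodule F ((Fin n → F) → F) :=
  Submodule.span F {f | f ∈ V ∧ rkFun F f < (R : ℕ∞)}

/-- Degree of a subspace of polynomial functions: the largest degree of any of its members. -/
noncomputable def degSub {n : ℕ} (W : Submodule F ((Fin n → F) → F)) : ℕ :=
  sSup (degF F '' (W : Set ((Fin n → F) → F)))

/-- A subspace of polynomial functions is homogeneous if it is spanned by forms. -/
def IsHomogeneousSub {n : ℕ} (W : Submodule F ((Fin n → F) → F)) : Prop :=
  ∃ S : Set ((Fin n → F) → F), (∀ f ∈ S, IsForm F f) ∧ W = Submodule.span F S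

/-- `V^↑`: the top-degree homogeneous component of `V` (the subspace consisting of `0`
together with the forms in `V` of degree `deg(V)`). -/
noncomputable def topComponent {n : ℕ} (V : Submodule F ((Fin n → F) → F)) :
    Submodule F ((Fin n → F) → F) :=
  Submodule.span F {f | f ∈ V ∧ IsFormOfDegree F f (degSub F V)}

/-- `f ∈ F[X]`: `f` is a polynomial expression in `X₁, …, X_k`. -/
def InAlg {n k : ℕ} (X : Fin k → (Fin n → F) → F) (f : (Fin n → F) → F) : Prop :=
  ∃ G : MvPolynomial (Fin k) F, ∀ x, MvPolynomial.eval (fun i => X i x) G = f x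

/-- `Pr[X = y]` over a uniformly random input of `F^n`. -/
noncomputable def prEq {n k : ℕ} (X : Fin k → (Fin n → F) → F) (y : Fin k → F) : ℝ :=
  (Nat.card {x : Fin n → F // ∀ i, X i x = y i} : ℝ) / (Fintype.card F : ℝ) ^ n

/-- `Pr[X ∈ S]` over a uniformly random input of `F^n`. -/
noncomputable def prMem {n k : ℕ} (X : Fin k → (Fin n → F) → F) (S : Set (Fin k → F)) : ℝ :=
  (Nat.card {x : Fin n → F // (fun i => X i x) ∈ S} : ℝ) / (Fintype.card F : ℝ) ^ n

/-- A tuple `X = (X₀, X₁, …, X_k)` of forms is weak `ε`-regular: `X₀` has maximal degree and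
for every `y`, `|Pr[X = y] - q⁻¹ Pr[X' = y']| ≤ ε q^{-(k+1)}`, where `X' = (X₁, …, X_k)`. -/
def WeakRegular {n k : ℕ} (ε : ℝ) (X : Fin (k + 1) → (Fin n → F) → F) : Prop :=
  (∀ i, IsForm F (X i)) ∧
  (∀ i, degF F (X i) ≤ degF F (X 0)) ∧
  ∀ y : Fin (k + 1) → F,
    |prEq F X y -
      (Fintype.card F : ℝ)⁻¹ * prEq F (fun i : Fin k => X i.succ) (fun i : Fin k => y i.succ)|
      ≤ ε / (Fintype.card F : ℝ) ^ (k + 1)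

/-- The bias of a polynomial function with respect to an additive character `χ`. -/
noncomputable def biasF {n : ℕ} (χ : AddChar F ℂ) (f : (Fin n → F) → F) : ℂ :=
  (∑ x : Fin n → F, χ (f x)) / (Fintype.card F : ℂ) ^ n

/-- A tuple of forms `X = (X₁, …, X_r)` is `t`-rank-regular: every element of `Span(X)`
outside of some strict subspace has rank at least `t · r`. -/
def RankRegular {n r : ℕ} (t : ℕ) (X : Fin r → (Fin n → F) → F) : Prop :=
  ∃ U : Submodule F ((Fin n → F) → F), U < Submodule.span F (Set.range X) ∧
    ∀ f ∈ Submodule.span F (Set.range X), f ∉ U → ((t * r : ℕ) : ℕ∞) ≤ rkFun F f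

/-- `P ⊆ F[X]` is a minimal decomposition: no strict subspace of `Span(X)` spanned by forms
generates `P`. -/
def MinimalDecomp {n m r : ℕ} (P : Fin m → (Fin n → F) → F)
    (X : Fin r → (Fin n → F) → F) : Prop :=
  (∀ i, InAlg F X (P i)) ∧
  ∀ (k : ℕ) (Y : Fin k → (Fin n → F) → F), (∀ j, IsForm F (Y j)) →
    Submodule.span F (Set.range Y) < Submodule.span F (Set.range X) →
    ¬ ∀ i, InAlg F Y (P i)

/-- Degree of a univariate polynomial function: the degree of its reduced representative
(in which the variable has degree at most `|F| - 1`). -/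
noncomputable def degU (u : F → F) : ℕ :=
  sInf {d | ∃ p : Polynomial F, p.natDegree ≤ Fintype.card F - 1 ∧ (∀ x, p.eval x = u x) ∧
    p.natDegree = d}

/-- Univariate degree of a polynomial map `P : F^n → F^m`: the minimum degree of a
non-constant univariate polynomial curve whose image is contained in the image of `P`
(`∞` if no such curve exists, e.g. for constant maps). -/
noncomputable def udeg {n m : ℕ} (P : Fin m → (Fin n → F) → F) : ℕ∞ :=
  sInf {d : ℕ∞ | ∃ U : Fin m → F → F,
    NonConstantFn (fun t => fun i => U i t) ∧
    Set.range (fun t => fun i => U i t) ⊆ Set.range (fun x => fun i => P i x) ∧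
    d = ((Finset.univ.sup fun i => degU F (U i) : ℕ) : ℕ∞)}

/-- Univariate degree of a single polynomial function `P : F^n → F`. -/
noncomputable def udeg1 {n : ℕ} (f : (Fin n → F) → F) : ℕ∞ :=
  sInf {d : ℕ∞ | ∃ u : F → F, NonConstantFn u ∧ Set.range u ⊆ Set.range f ∧
    d = ((degU F u : ℕ) : ℕ∞)}

/-- `f` is `t`-reducible: a product of polynomial functions each of degree at most `t`. -/
def TReducible {n : ℕ} (t : ℝ) (f : (Fin n → F) → F) : Prop :=
  ∃ (s : ℕ) (g : Fin s → (Fin n → F) → F), (∀ j, (degF F (g j) : ℝ) ≤ t) ∧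
    ∀ x, f x = ∏ j, g j x

/-- The line in `F^(k+1)` through `z` in direction `e₁`. -/
def lineE1 {k : ℕ} (z : Fin (k + 1) → F) : Set (Fin (k + 1) → F) :=
  {y | ∃ t : F, y = t • (Pi.single (0 : Fin (k + 1)) (1 : F) : Fin (k + 1) → F) + z}


section Aux

variable {n : ℕ}

lemma reducedPoly_iff_mem (P : MvPolynomial (Fin n) F) :
    ReducedPoly F P ↔ P ∈ MvPolynomial.restrictDegree (Fin n) F (Fintype.card F - 1) := by
  rw [MvPolynomial.mem_restrictDegree_iff_sup]
  unfold ReducedPoly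
  simp [MvPolynomial.degreeOf_def]

lemma reduced_rep_unique {P Q : MvPolynomial (Fin n) F} {f : (Fin n → F) → F}
    (hP : ReducedPoly F P) (hfP : Represents F P f)
    (hQ : ReducedPoly F Q) (hfQ : Represents F Q f) : P = Q := by
  have h0 : P - Q = 0 :=
    MvPolynomial.eq_zero_of_eval_eq_zero (Fin n) F (P - Q)
      (fun v => by simp [hfP v, hfQ v])
      (Submodule.sub_mem _ ((reducedPoly_iff_mem F P).1 hP) ((reducedPoly_iff_mem F Q).1 hQ))
  exact sub_eq_zero.1 h0

lemma exists_reduced_rep (f : (Fin n → F) → F) :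
    ∃ P : MvPolynomial (Fin n) F, ReducedPoly F P ∧ Represents F P f := by
  have hmem : f ∈ (MvPolynomial.restrictDegree (Fin n) F (Fintype.card F - 1)).map
      (MvPolynomial.evalₗ F (Fin n)) := by
    rw [MvPolynomial.map_restrict_dom_evalₗ]; trivial
  obtain ⟨P, hP, hPf⟩ := Submodule.mem_map.mp hmem
  refine ⟨P, (reducedPoly_iff_mem F P).2 hP, fun x => ?_⟩
  have := congrFun hPf x
  simpa using this

lemma degF_eq {f : (Fin n → F) → F} {P : MvPolynomial (Fin n) F}
    (hP : ReducedPoly F P) (hfP : Represents F P f) :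
    degF F f = P.totalDegree := by
  have hset : {d | ∃ Q : MvPolynomial (Fin n) F,
      ReducedPoly F Q ∧ Represents F Q f ∧ Q.totalDegree = d} = {P.totalDegree} := by
    ext d
    constructor
    · rintro ⟨Q, hQ, hfQ, rfl⟩
      simp [reduced_rep_unique F hQ hfQ hP hfP]
    · rintro rfl
      exact ⟨P, hP, hfP, rfl⟩
  rw [degF, hset, csInf_singleton]

lemma rkFun_eq {f : (Fin n → F) → F} {P : MvPolynomial (Fin n) F}
    (hP : ReducedPoly F P) (hfP : Represents F P f) :
    rkFun F f = if P.totalDegree = 0 then 0 else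
      rkFormD F P.totalDegree
        (fun x => MvPolynomial.eval x ((MvPolynomial.homogeneousComponent P.totalDegree) P)) := by
  have hset : {r : ℕ∞ | ∃ Q : MvPolynomial (Fin n) F, ReducedPoly F Q ∧ Represents F Q f ∧
      r = if Q.totalDegree = 0 then 0 else
        rkFormD F Q.totalDegree
          (fun x => MvPolynomial.eval x ((MvPolynomial.homogeneousComponent Q.totalDegree) Q))}
      = {if P.totalDegree = 0 then 0 else
          rkFormD F P.totalDegree
            (fun x => MvPolynomial.eval x
              ((MvPolynomial.homogeneousComponent P.totalDegree) P))} := by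
    ext r
    constructor
    · rintro ⟨Q, hQ, hfQ, rfl⟩
      simp [reduced_rep_unique F hQ hfQ hP hfP]
    · rintro rfl
      exact ⟨P, hP, hfP, rfl⟩
  rw [rkFun, hset, csInf_singleton]

lemma degF_zero : degF F (0 : (Fin n → F) → F) = 0 := by
  have h := degF_eq F (P := (0 : MvPolynomial (Fin n) F)) (f := (0 : (Fin n → F) → F))
    (fun i => by simp) (fun x => by simp)
  simpa using h

lemma degF_add_le (f g : (Fin n → F) → F) :
    degF F (f + g) ≤ max (degF F f) (degF F g) := by
  obtain ⟨P, hP, hfP⟩ := exists_reduced_rep F f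
  obtain ⟨Q, hQ, hfQ⟩ := exists_reduced_rep F g
  have hred : ReducedPoly F (P + Q) := (reducedPoly_iff_mem F _).2
    (Submodule.add_mem _ ((reducedPoly_iff_mem F P).1 hP) ((reducedPoly_iff_mem F Q).1 hQ))
  have hrep : Represents F (P + Q) (f + g) := fun x => by
    simp [hfP x, hfQ x]
  rw [degF_eq F hred hrep, degF_eq F hP hfP, degF_eq F hQ hfQ]
  exact MvPolynomial.totalDegree_add P Q

lemma degF_smul_le (c : F) (f : (Fin n → F) → F) :
    degF F (c • f) ≤ degF F f := by
  obtain ⟨P, hP, hfP⟩ := exists_reduced_rep F f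
  have hred : ReducedPoly F (c • P) := (reducedPoly_iff_mem F _).2
    (Submodule.smul_mem _ c ((reducedPoly_iff_mem F P).1 hP))
  have hrep : Represents F (c • P) (c • f) := fun x => by
    rw [MvPolynomial.smul_eval]
    simp [hfP x]
  rw [degF_eq F hred hrep, degF_eq F hP hfP]
  exact MvPolynomial.totalDegree_smul_le c P

lemma rkFun_add_right_eq {f g : (Fin n → F) → F} (h : degF F f < degF F g) :
    rkFun F (g + f) = rkFun F g := by
  obtain ⟨P, hP, hgP⟩ := exists_reduced_rep F g
  obtain ⟨Q, hQ, hfQ⟩ := exists_reduced_rep F f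
  have hd : Q.totalDegree < P.totalDegree := by
    rwa [degF_eq F hQ hfQ, degF_eq F hP hgP] at h
  have hred : ReducedPoly F (P + Q) := (reducedPoly_iff_mem F _).2
    (Submodule.add_mem _ ((reducedPoly_iff_mem F P).1 hP) ((reducedPoly_iff_mem F Q).1 hQ))
  have hrep : Represents F (P + Q) (g + f) := fun x => by
    simp [hgP x, hfQ x]
  have htd : (P + Q).totalDegree = P.totalDegree := by
    refine le_antisymm ((MvPolynomial.totalDegree_add P Q).trans (max_le le_rfl hd.le)) ?_
    have h1 : P.totalDegree ≤ max (P + Q).totalDegree Q.totalDegree := by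
      have := MvPolynomial.totalDegree_sub (P + Q) Q
      simpa using this
    rcases max_cases (P + Q).totalDegree Q.totalDegree with ⟨he, _⟩ | ⟨he, hlt⟩
    · rwa [he] at h1
    · rw [he] at h1; omega
  have hcomp : (MvPolynomial.homogeneousComponent P.totalDegree) (P + Q)
      = (MvPolynomial.homogeneousComponent P.totalDegree) P := by
    rw [map_add, MvPolynomial.homogeneousComponent_eq_zero _ _ hd, add_zero]
  rw [rkFun_eq F hred hrep, rkFun_eq F hP hgP, htd, hcomp]

end Aux

/-- Every `X ∈ V` with `deg(X) < deg(U_R(V))` lies in `U_R(V)`. -/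
theorem mem_lowRankSpan_of_degree_lt (n R : ℕ) (V : Submodule F ((Fin n → F) → F))
    (f : (Fin n → F) → F) (hf : f ∈ V)
    (hdeg : degF F f < degSub F (lowRankSpan F V R)) :
    f ∈ lowRankSpan F V R := by
  set S : Set ((Fin n → F) → F) := {h | h ∈ V ∧ rkFun F h < (R : ℕ∞)} with hS
  have hspan : lowRankSpan F V R = Submodule.span F S := rfl
  obtain ⟨d, hdmem, hd⟩ := exists_lt_of_lt_csSup' hdeg
  obtain ⟨Y', hY'mem, rfl⟩ := hdmem
  by_cases hall : ∀ g ∈ S, degF F g ≤ degF F f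
  · exfalso
    rw [hspan] at hY'mem
    have hle : degF F Y' ≤ degF F f := by
      refine Submodule.span_induction (p := fun x _ => degF F x ≤ degF F f)
        (fun x hx => hall x hx) ?_ ?_ ?_ hY'mem
      · simp [degF_zero]
      · intro a b _ _ hA hB
        exact (degF_add_le F a b).trans (max_le hA hB)
      · intro c a _ hA
        exact (degF_smul_le F c a).trans hA
    exact absurd hd (not_lt.2 hle)
  · push_neg at hall
    obtain ⟨Y, hYS, hYd⟩ := hall
    have hg : rkFun F (Y + f) = rkFun F Y := rkFun_add_right_eq F hYd
    have hgS : Y + f ∈ S := ⟨V.add_mem hYS.1 hf, hg ▸ hYS.2⟩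
    have hsub : (Y + f) - Y ∈ lowRankSpan F V R := by
      rw [hspan]
      exact Submodule.sub_mem _ (Submodule.subset_span hgS) (Submodule.subset_span hYS)
    simpa using hsub

end PaperDefs
end

section
/- Let U ⊊ V be linear subspaces of polynomials over F = F_q with dim(V) = k, and suppose |bias(X)| ≤ ε q^{-k} for every X ∈ V \ U. Then any basis X = (X_1,...,X_k) of V consisting of forms, which contains a basis of U and satisfies X_1 ∉ U and deg(X_1) = max_i deg(X_i), is weak ε-regular. -/
open MvPolynomial
open scoped BigOperators

namespace PaperDefs

variable (F : Type) [Field F] [Fintype F] [DecidableEq F]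

/-! Expanding the indicator of `X = y` in additive characters gives
`q^{k+1} #{X = y} = ∑_l ∑_x χ(∑ᵢ lᵢ (Xᵢ x - yᵢ))`. The terms with `l₀ = 0` add up
to `q^k #{X' = y'}`. For `l₀ ≠ 0` the form `∑ᵢ lᵢ Xᵢ` lies in `V \ U`, because `X` is
linearly independent, `U` is spanned by some of the `Xᵢ`, and `X₀ ∉ U`; so each of
these `(q - 1) q^k` character sums is at most `q^n · ε q^{-(k+1)}` in modulus. -/

theorem addChar_map_sum {A M ι : Type*} [AddCommMonoid A] [CommMonoid M] (χ : AddChar A M)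
    (s : Finset ι) (f : ι → A) : χ (∑ i ∈ s, f i) = ∏ i ∈ s, χ (f i) :=
  map_prod χ.toMonoidHom (fun i => Multiplicative.ofAdd (f i)) s

theorem norm_sum_addChar_sub_const {A Ω : Type*} [AddCommGroup A] [Finite A] [Fintype Ω]
    (χ : AddChar A ℂ) (f : Ω → A) (a : A) :
    ‖∑ x, χ (f x - a)‖ = ‖∑ x, χ (f x)‖ := by
  simp_rw [AddChar.map_sub_eq_div, div_eq_mul_inv, ← Finset.sum_mul, norm_mul, norm_inv,
    AddChar.norm_apply, inv_one, mul_one]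

theorem sum_smul_notMem_span_image {K M ι : Type*} [Field K] [AddCommGroup M] [Module K M]
    [Fintype ι] {v : ι → M} (hv : LinearIndependent K v) {s : Set ι} {i : ι}
    (hi : v i ∉ Submodule.span K (v '' s)) {l : ι → K} (hl : l i ≠ 0) :
    ∑ j, l j • v j ∉ Submodule.span K (v '' s) := by
  classical
  intro hmem
  have hs : s ⊆ {i}ᶜ := fun j hj hji => hi (hji ▸ Submodule.subset_span ⟨j, hj, rfl⟩)
  set W := Submodule.span K (v '' {i}ᶜ)
  have hrest : ∑ j ∈ Finset.univ.erase i, l j • v j ∈ W :=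
    W.sum_mem fun j hj => W.smul_mem _ <|
      Submodule.subset_span ⟨j, Finset.ne_of_mem_erase hj, rfl⟩
  have hli : l i • v i ∈ W := by
    rw [← Finset.add_sum_erase _ _ (Finset.mem_univ i)] at hmem
    simpa using W.sub_mem (Submodule.span_mono (Set.image_mono hs) hmem) hrest
  exact hv.notMem_span_image (s := {i}ᶜ) (x := i) (by simp) <| by
    simpa [hl] using W.smul_mem (l i)⁻¹ hli

section CharacterSums

variable {K Ω : Type*} [Field K] [Fintype K] [Fintype Ω] (χ : AddChar K ℂ)

theorem sum_addChar_sum_mul_eq_ite [DecidableEq K] (hχ : χ ≠ 1) {ι : Type*} [Fintype ι]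
    [DecidableEq ι] (c : ι → K) :
    ∑ l : ι → K, χ (∑ i, l i * c i) =
      if c = 0 then (Fintype.card K : ℂ) ^ Fintype.card ι else 0 := by
  have hsum := fun i => AddChar.sum_mulShift (c i) (AddChar.IsPrimitive.of_ne_one hχ)
  calc ∑ l : ι → K, χ (∑ i, l i * c i)
      = ∑ l : ι → K, ∏ i, χ (l i * c i) := by simp_rw [addChar_map_sum]
    _ = ∏ i, ∑ t : K, χ (t * c i) := (Fintype.prod_sum fun i t => χ (t * c i)).symm
    _ = _ := by
        simp only [hsum, Nat.cast_ite, Nat.cast_zero, Fintype.prod_ite_zero, funext_iff]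
        simp

theorem card_pow_mul_card_fiber_eq_sum_addChar (hχ : χ ≠ 1) {ι : Type*} [Fintype ι]
    [DecidableEq ι] (Z : ι → Ω → K) (y : ι → K) :
    (Fintype.card K : ℂ) ^ Fintype.card ι * Nat.card {x // ∀ i, Z i x = y i} =
      ∑ l : ι → K, ∑ x, χ (∑ i, l i * (Z i x - y i)) := by
  classical
  rw [Finset.sum_comm, Nat.card_eq_fintype_card, Fintype.card_subtype, Finset.card_filter,
    Nat.cast_sum, Finset.mul_sum]
  refine Finset.sum_congr rfl fun x _ => ?_
  rw [sum_addChar_sum_mul_eq_ite χ hχ]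
  simp [funext_iff, sub_eq_zero]

theorem card_fiber_sub_card_fiber_tail_eq [DecidableEq K] (hχ : χ ≠ 1) {k : ℕ}
    (Z : Fin (k + 1) → Ω → K) (y : Fin (k + 1) → K) :
    (Fintype.card K : ℂ) ^ (k + 1) * Nat.card {x // ∀ i, Z i x = y i} -
        (Fintype.card K : ℂ) ^ k * Nat.card {x // ∀ i : Fin k, Z i.succ x = y i.succ} =
      ∑ t ∈ Finset.univ.erase 0, ∑ μ : Fin k → K,
        ∑ x, χ (∑ i, Fin.cons t μ i * (Z i x - y i)) := by
  have hfull := card_pow_mul_card_fiber_eq_sum_addChar χ hχ Z y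
  have htail := card_pow_mul_card_fiber_eq_sum_addChar χ hχ (fun i : Fin k => Z i.succ)
    (fun i => y i.succ)
  simp only [Fintype.card_fin] at hfull htail
  rw [hfull, htail, ← (Fin.consEquiv fun _ => K).sum_comp, Fintype.sum_prod_type,
    ← Finset.add_sum_erase _ _ (Finset.mem_univ 0)]
  simp [Fin.consEquiv, Fin.sum_univ_succ]

theorem norm_card_fiber_sub_card_fiber_tail_le (hχ : χ ≠ 1) {k : ℕ}
    (Z : Fin (k + 1) → Ω → K) (y : Fin (k + 1) → K) (β : ℝ)
    (hβ : ∀ l : Fin (k + 1) → K, l 0 ≠ 0 → ‖∑ x, χ (∑ i, l i * Z i x)‖ ≤ β) :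
    ‖(Fintype.card K : ℂ) ^ (k + 1) * Nat.card {x // ∀ i, Z i x = y i} -
        (Fintype.card K : ℂ) ^ k * Nat.card {x // ∀ i : Fin k, Z i.succ x = y i.succ}‖ ≤
      (Fintype.card K - 1) * Fintype.card K ^ k * β := by
  classical
  rw [card_fiber_sub_card_fiber_tail_eq χ hχ]
  have hterm : ∀ t ∈ Finset.univ.erase 0, ∀ μ : Fin k → K,
      ‖∑ x, χ (∑ i, Fin.cons t μ i * (Z i x - y i))‖ ≤ β := by
    intro t ht μ
    simp_rw [mul_sub, Finset.sum_sub_distrib, norm_sum_addChar_sub_const]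
    exact hβ _ (by simpa using ht)
  calc _ ≤ ∑ t ∈ Finset.univ.erase 0, ∑ μ : Fin k → K, β :=
        norm_sum_le_of_le _ fun t ht => norm_sum_le_of_le _ fun μ _ => hterm t ht μ
    _ = _ := by
        simp [Finset.card_erase_of_mem, Nat.cast_sub Fintype.card_pos]
        ring

end CharacterSums

theorem abs_prEq_sub_le_of_bias_le {K : Type} [Field K] [Fintype K] (χ : AddChar K ℂ)
    (hχ : χ ≠ 1) {n k : ℕ} (Z : Fin (k + 1) → (Fin n → K) → K) (y : Fin (k + 1) → K) (δ : ℝ)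
    (hδ : ∀ l : Fin (k + 1) → K, l 0 ≠ 0 → ‖biasF K χ (∑ i, l i • Z i)‖ ≤ δ) :
    |prEq K Z y - (Fintype.card K : ℝ)⁻¹ *
        prEq K (fun i : Fin k => Z i.succ) (fun i : Fin k => y i.succ)| ≤ δ := by
  have hq : (0 : ℝ) < Fintype.card K := mod_cast Fintype.card_pos
  have hδ0 : 0 ≤ δ := (norm_nonneg _).trans (hδ (Pi.single 0 1) (by simp))
  have hsum : ∀ l : Fin (k + 1) → K, l 0 ≠ 0 →
      ‖∑ x, χ (∑ i, l i * Z i x)‖ ≤ (Fintype.card K : ℝ) ^ n * δ := by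
    intro l hl
    have hb := hδ l hl
    simp only [biasF, norm_div, norm_pow, Complex.norm_natCast, Finset.sum_apply, Pi.smul_apply,
      smul_eq_mul] at hb
    rwa [div_le_iff₀' (by positivity)] at hb
  have hcount := norm_card_fiber_sub_card_fiber_tail_le χ hχ Z y _ hsum
  have hreal : ((Fintype.card K : ℂ) ^ (k + 1) * Nat.card {x // ∀ i, Z i x = y i} -
      (Fintype.card K : ℂ) ^ k * Nat.card {x // ∀ i : Fin k, Z i.succ x = y i.succ}) =
      (((Fintype.card K : ℝ) ^ (k + 1) * Nat.card {x // ∀ i, Z i x = y i} -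
        (Fintype.card K : ℝ) ^ k * Nat.card {x // ∀ i : Fin k, Z i.succ x = y i.succ} : ℝ)
        : ℂ) := by
    push_cast
    ring
  rw [hreal, Complex.norm_real, Real.norm_eq_abs] at hcount
  have hdiff : prEq K Z y - (Fintype.card K : ℝ)⁻¹ *
        prEq K (fun i : Fin k => Z i.succ) (fun i : Fin k => y i.succ) =
      ((Fintype.card K : ℝ) ^ (k + 1) * Nat.card {x // ∀ i, Z i x = y i} -
        (Fintype.card K : ℝ) ^ k * Nat.card {x // ∀ i : Fin k, Z i.succ x = y i.succ}) /
      ((Fintype.card K : ℝ) ^ (k + 1) * Fintype.card K ^ n) := by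
    simp only [prEq]
    field_simp
    ring
  rw [hdiff, abs_div, abs_mul, abs_pow, abs_pow, abs_of_pos hq, div_le_iff₀ (by positivity)]
  calc _ ≤ _ := hcount
    _ ≤ Fintype.card K * Fintype.card K ^ k * (Fintype.card K ^ n * δ) := by gcongr; linarith
    _ = _ := by ring

theorem weakRegular_of_bias (χ : AddChar F ℂ) (hχ : χ ≠ 1) (n k : ℕ)
    (U V : Submodule F ((Fin n → F) → F)) (ε : ℝ)
    (hbias : ∀ f ∈ V, f ∉ U →
      ‖biasF F χ f‖ ≤ ε / (Fintype.card F : ℝ) ^ (k + 1))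
    (X : Fin (k + 1) → (Fin n → F) → F)
    (hforms : ∀ i, IsForm F (X i))
    (hindep : LinearIndependent F X)
    (hspan : Submodule.span F (Set.range X) = V)
    (hUbasis : ∃ S : Set (Fin (k + 1)), Submodule.span F (X '' S) = U)
    (hX1 : X 0 ∉ U)
    (hdeg : ∀ i, degF F (X i) ≤ degF F (X 0)) :
    WeakRegular F ε X := by
  obtain ⟨S, rfl⟩ := hUbasis
  refine ⟨hforms, hdeg, fun y => abs_prEq_sub_le_of_bias_le χ hχ X y _ fun l hl => ?_⟩
  refine hbias _ ?_ (sum_smul_notMem_span_image hindep hX1 hl)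
  rw [← hspan]
  exact Submodule.sum_mem _ fun i _ => Submodule.smul_mem _ _ (Submodule.subset_span ⟨i, rfl⟩)

end PaperDefs
end

section
/- Let X = (X_1,...,X_r) be a weak ε-regular tuple of forms over F = F_q. For every line ℓ ⊆ F^r in direction e_1 (that is, ℓ = {t·e_1 + z : t ∈ F} for some z ∈ F^r), if Pr[X ∈ ℓ] > ε q^{-(r-1)} then ℓ ⊆ Image(X), where X is viewed as a polynomial map F^n → F^r. -/
open MvPolynomial
open scoped BigOperators

namespace PaperDefs

variable (F : Type) [Field F] [Fintype F] [DecidableEq F]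

/-- If `X` is weak `ε`-regular and a line `ℓ` in direction `e₁` satisfies
`Pr[X ∈ ℓ] > ε q^{-(r-1)}` (here the tuple has `r = k + 1` entries), then `ℓ ⊆ Image(X)`. -/
theorem line_subset_image_of_popular (n k : ℕ) (ε : ℝ)
    (X : Fin (k + 1) → (Fin n → F) → F) (hreg : WeakRegular F ε X)
    (z : Fin (k + 1) → F)
    (hpop : prMem F X (lineE1 F z) > ε / (Fintype.card F : ℝ) ^ k) :
    lineE1 F z ⊆ Set.range (fun x => fun i => X i x) := by
  intro y hy
  obtain ⟨t, rfl⟩ := hy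
  set q : ℝ := (Fintype.card F : ℝ) with hqdef
  have hq0 : (0:ℝ) < q := by
    rw [hqdef]
    exact_mod_cast Fintype.card_pos (α := F)
  have hsucc : ∀ (s : F) (i : Fin k),
      (s • (Pi.single (0 : Fin (k+1)) (1:F) : Fin (k+1) → F) + z) i.succ = z i.succ := by
    intro s i
    simp [Pi.single_apply, Fin.succ_ne_zero]
  set c := prEq F (fun i : Fin k => X i.succ) (fun i : Fin k => z i.succ) with hc
  -- Pr[X ∈ ℓ] ≤ Pr[X' = z']
  have hle : prMem F X (lineE1 F z) ≤ c := by
    rw [hc]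
    unfold prMem prEq
    apply div_le_div_of_nonneg_right ?_ (by positivity)
    · have hcard : Nat.card {x : Fin n → F // (fun i => X i x) ∈ lineE1 F z} ≤
          Nat.card {x : Fin n → F // ∀ i : Fin k, X i.succ x = z i.succ} := by
        apply Nat.card_le_card_of_injective
          (f := fun a => ⟨a.1, by
            obtain ⟨s, hs⟩ := a.2
            intro i
            have := congrFun hs i.succ
            rw [this, hsucc s i]⟩)
        intro a b hab
        simp only [Subtype.mk.injEq] at hab
        exact Subtype.ext hab
      exact_mod_cast hcard
  have hcpos : ε / q ^ k < c := lt_of_lt_of_le hpop hle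
  -- regularity at the point y = t·e₁ + z
  have hreg3 := hreg.2.2 (t • (Pi.single (0 : Fin (k+1)) (1:F) : Fin (k+1) → F) + z)
  have hyz : (fun i : Fin k =>
      (t • (Pi.single (0 : Fin (k+1)) (1:F) : Fin (k+1) → F) + z) i.succ) =
      fun i : Fin k => z i.succ := funext fun i => hsucc t i
  rw [hyz] at hreg3
  have habs := abs_le.mp hreg3
  have hlower : q⁻¹ * c - ε / q ^ (k+1) ≤
      prEq F X (t • (Pi.single (0 : Fin (k+1)) (1:F) : Fin (k+1) → F) + z) := by
    have := habs.1
    linarith [this]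
  have heq : q⁻¹ * c - ε / q ^ (k+1) = q⁻¹ * (c - ε / q ^ k) := by
    field_simp
    ring
  have hpos : 0 < prEq F X (t • (Pi.single (0 : Fin (k+1)) (1:F) : Fin (k+1) → F) + z) := by
    have h1 : 0 < q⁻¹ * (c - ε / q ^ k) := by
      apply mul_pos (inv_pos.mpr hq0)
      linarith
    linarith [heq ▸ hlower]
  -- positive probability ⇒ nonempty fiber
  have hne : Nonempty {x : Fin n → F // ∀ i,
      X i x = (t • (Pi.single (0 : Fin (k+1)) (1:F) : Fin (k+1) → F) + z) i} := by
    by_contra hcontra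
    rw [not_nonempty_iff] at hcontra
    have : Nat.card {x : Fin n → F // ∀ i,
        X i x = (t • (Pi.single (0 : Fin (k+1)) (1:F) : Fin (k+1) → F) + z) i} = 0 :=
      Nat.card_of_isEmpty
    unfold prEq at hpos
    rw [this] at hpos
    simp at hpos
  obtain ⟨x, hx⟩ := hne
  exact ⟨x, funext hx⟩

end PaperDefs
end

section
/- Schwartz–Zippel for decompositions: Let P : F_q^n → F_q be a nonzero polynomial of degree at most d, and suppose P = F(X_1,...,X_k) for some polynomial F : F_q^k → F_q and polynomial map X = (X_1,...,X_k) : F_q^n → F_q^k. Then there exists y ∈ F_q^k such that F(y) ≠ 0 and Pr_{z ∈ F_q^k}[F(z) ≠ 0] · Pr_{x ∈ F_q^n}[X(x) = y] ≥ (1 − d/q) q^{-k}. -/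
open MvPolynomial
open scoped BigOperators

namespace PaperDefs

variable (F : Type) [Field F] [Fintype F] [DecidableEq F]

/-! By Schwartz–Zippel applied to a representative of `P` of degree `deg P ≤ d`, `P` is nonzero
on at least `(1 - d/q) q^n` points. `X` maps each of them into the support of `G`, so by
pigeonhole some `y` in that support has a fiber of size at least `(1 - d/q) q^n / #{G ≠ 0}`. -/

open Finset

theorem exists_reducedPoly_represents {K : Type} [Field K] [Fintype K] {n : ℕ}
    (f : (Fin n → K) → K) : ∃ Q : MvPolynomial (Fin n) K, ReducedPoly K Q ∧ Represents K Q f := by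
  have hf : f ∈ (restrictDegree (Fin n) K (Fintype.card K - 1)).map (evalₗ K (Fin n)) := by
    rw [map_restrict_dom_evalₗ]
    trivial
  obtain ⟨Q, hQ, rfl⟩ := Submodule.mem_map.mp hf
  exact ⟨Q, fun i => degreeOf_le_iff.mpr fun s hs => (mem_restrictDegree _ _ _).mp hQ s hs i,
    fun _ => rfl⟩

theorem exists_represents_totalDegree_eq_degF {K : Type} [Field K] [Fintype K] {n : ℕ}
    (f : (Fin n → K) → K) :
    ∃ Q : MvPolynomial (Fin n) K, Represents K Q f ∧ Q.totalDegree = degF K f := by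
  obtain ⟨Q, hQred, hQrep⟩ := exists_reducedPoly_represents f
  obtain ⟨Q, -, hrep, hdeg⟩ := Nat.sInf_mem (s := {d | ∃ Q : MvPolynomial (Fin n) K,
    ReducedPoly K Q ∧ Represents K Q f ∧ Q.totalDegree = d}) ⟨_, Q, hQred, hQrep, rfl⟩
  exact ⟨Q, hrep, hdeg⟩

theorem card_zeros_mul_card_le {K : Type*} [Field K] [Fintype K] [DecidableEq K] {n : ℕ}
    {Q : MvPolynomial (Fin n) K} (hQ : Q ≠ 0) :
    #{x | eval x Q = 0} * Fintype.card K ≤ Q.totalDegree * Fintype.card K ^ n := by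
  have h := schwartz_zippel_totalDegree hQ (Finset.univ : Finset K)
  rw [Fintype.piFinset_univ, Finset.card_univ,
    div_le_div_iff₀ (by simp [Fintype.card_pos]) (by simp [Fintype.card_pos])] at h
  exact_mod_cast h

theorem one_sub_degF_div_mul_le_card_ne_zero {K : Type} [Field K] [Fintype K] [DecidableEq K]
    {n : ℕ} {P : (Fin n → K) → K} (hP : P ≠ fun _ => 0) :
    (1 - (degF K P : ℝ) / Fintype.card K) * (Fintype.card K : ℝ) ^ n ≤ #{x | P x ≠ 0} := by
  obtain ⟨Q, hrep, hdeg⟩ := exists_represents_totalDegree_eq_degF P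
  have hQ : Q ≠ 0 := by
    rintro rfl
    exact hP (funext fun x => by rw [← hrep x, map_zero])
  have hzeros : #{x | P x = 0} * Fintype.card K ≤ degF K P * Fintype.card K ^ n := by
    simpa only [hrep _, hdeg] using card_zeros_mul_card_le hQ
  have hsplit : (#{x | P x = 0} : ℝ) + #{x | P x ≠ 0} = Fintype.card K ^ n := by
    rw [← Nat.cast_add, card_filter_add_card_filter_not, card_univ, Fintype.card_fun,
      Fintype.card_fin, Nat.cast_pow]
  have hq : (0 : ℝ) < Fintype.card K := by exact_mod_cast Fintype.card_pos
  have hzerosR : (#{x | P x = 0} : ℝ) ≤ degF K P * Fintype.card K ^ n / Fintype.card K := by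
    rw [le_div_iff₀ hq]
    exact_mod_cast hzeros
  calc (1 - (degF K P : ℝ) / Fintype.card K) * (Fintype.card K : ℝ) ^ n
      = Fintype.card K ^ n - degF K P * Fintype.card K ^ n / Fintype.card K := by ring
    _ ≤ Fintype.card K ^ n - #{x | P x = 0} := by gcongr
    _ = #{x | P x ≠ 0} := by rw [← hsplit]; ring

theorem exists_card_le_card_mul_card_fiber {α β : Type*} [DecidableEq β] {f : α → β}
    {s : Finset α} {t : Finset β} (hf : ∀ a ∈ s, f a ∈ t) (hs : s.Nonempty) :
    ∃ y ∈ t, #s ≤ #t * #{x ∈ s | f x = y} := by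
  have ht : t.Nonempty := hs.image f |>.mono (image_subset_iff.mpr hf)
  have htpos : (0 : ℚ) < #t := by exact_mod_cast ht.card_pos
  obtain ⟨y, hy, hle⟩ := exists_le_card_fiber_of_nsmul_le_card_of_maps_to hf ht
    (b := (#s : ℚ) / #t) (by rw [nsmul_eq_mul, mul_div_cancel₀ _ htpos.ne'])
  refine ⟨y, hy, ?_⟩
  rw [div_le_iff₀' htpos] at hle
  exact_mod_cast hle

theorem prEq_eq_card_div {K : Type} [Fintype K] [DecidableEq K] {n k : ℕ}
    (X : Fin k → (Fin n → K) → K) (y : Fin k → K) :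
    prEq K X y = #{x | (fun i => X i x) = y} / (Fintype.card K : ℝ) ^ n := by
  simp only [prEq, Nat.card_eq_fintype_card, Fintype.card_subtype, funext_iff]

/-- **Schwartz–Zippel for decompositions.** If a nonzero polynomial `P` of degree at most `d`
satisfies `P = G(X₁, …, X_k)`, then there is `y ∈ F^k` with `G(y) ≠ 0` and
`Pr[G ≠ 0] · Pr[X = y] ≥ (1 - d/q) q^{-k}`. -/
theorem schwartz_zippel_decomposition (n k d : ℕ)
    (P : (Fin n → F) → F) (hP : P ≠ fun _ => 0) (hdeg : degF F P ≤ d)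
    (G : (Fin k → F) → F) (X : Fin k → (Fin n → F) → F)
    (hdecomp : ∀ x, G (fun i => X i x) = P x) :
    ∃ y : Fin k → F, G y ≠ 0 ∧
      ((Nat.card {z : Fin k → F // G z ≠ 0} : ℝ) / (Fintype.card F : ℝ) ^ k) * prEq F X y ≥
        (1 - (d : ℝ) / (Fintype.card F : ℝ)) / (Fintype.card F : ℝ) ^ k := by
  obtain ⟨x₀, hx₀⟩ : ∃ x, P x ≠ 0 := by
    by_contra! h
    exact hP (funext h)
  obtain ⟨y, hy, hfiber⟩ := exists_card_le_card_mul_card_fiber (f := fun x i => X i x)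
    (s := {x | P x ≠ 0}) (t := {z | G z ≠ 0}) (by simp [hdecomp]) ⟨x₀, by simpa using hx₀⟩
  refine ⟨y, (mem_filter.mp hy).2, ?_⟩
  have hcount : #{x | P x ≠ 0} ≤ #{z | G z ≠ 0} * #{x | (fun i => X i x) = y} :=
    hfiber.trans (Nat.mul_le_mul_left _ (card_le_card (filter_subset_filter _ (subset_univ _))))
  have hmass : 1 - (d : ℝ) / Fintype.card F ≤
      (#{z | G z ≠ 0} * #{x | (fun i => X i x) = y} : ℕ) / (Fintype.card F : ℝ) ^ n := by
    rw [le_div_iff₀ (by positivity)]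
    calc (1 - (d : ℝ) / Fintype.card F) * (Fintype.card F : ℝ) ^ n
        ≤ (1 - (degF F P : ℝ) / Fintype.card F) * (Fintype.card F : ℝ) ^ n := by gcongr
      _ ≤ #{x | P x ≠ 0} := one_sub_degF_div_mul_le_card_ne_zero hP
      _ ≤ _ := by exact_mod_cast hcount
  rw [Nat.card_eq_fintype_card, Fintype.card_subtype, prEq_eq_card_div, ge_iff_le]
  calc (1 - (d : ℝ) / Fintype.card F) / (Fintype.card F : ℝ) ^ k
      ≤ (#{z | G z ≠ 0} * #{x | (fun i => X i x) = y} : ℕ) / (Fintype.card F : ℝ) ^ n /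
          (Fintype.card F : ℝ) ^ k := by gcongr
    _ = _ := by push_cast; ring

end PaperDefs
end

section
/- Let P : F^n → F be a polynomial over a finite field F (identified with its reduced representative in which every variable has degree at most |F|−1), and let x_i be a variable with deg_i(P) ≥ 1, where deg_i(P) denotes the degree of P in the variable x_i. Then udeg(P) ≤ deg_i(P). -/
open MvPolynomial
open scoped BigOperators

namespace PaperDefs

variable (F : Type) [Field F] [Fintype F] [DecidableEq F]

/-- For a polynomial function given by its reduced representative `P`, if the variable `xᵢ`
occurs (i.e. `deg_i(P) ≥ 1`), then `udeg(P) ≤ deg_i(P)`. -/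
theorem udeg_le_degreeOf (n : ℕ) (P : MvPolynomial (Fin n) F)
    (hP : ReducedPoly F P) (i : Fin n) (hi : 1 ≤ P.degreeOf i) :
    udeg1 F (fun x => MvPolynomial.eval x P) ≤ (P.degreeOf i : ℕ∞) := by
  classical
  set q := Fintype.card F with hq
  -- the part of P with no x_i
  set P₀ : MvPolynomial (Fin n) F :=
    ∑ s ∈ P.support.filter (fun s => s i = 0), monomial s (coeff s P) with hP₀
  have coeff_P₀ : ∀ m, coeff m P₀ = if m i = 0 then coeff m P else 0 := by
    intro m
    rw [hP₀, coeff_sum]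
    simp only [coeff_monomial]
    rw [Finset.sum_ite_eq' _ m (fun s => coeff s P)]
    by_cases h1 : m i = 0
    · by_cases h2 : m ∈ P.support
      · simp [Finset.mem_filter, h1, h2]
      · simp [Finset.mem_filter, h1, h2, MvPolynomial.notMem_support_iff.mp h2]
    · simp [Finset.mem_filter, h1]
  have eval_P₀ : ∀ z : Fin n → F,
      eval (fun j => if j = i then 0 else z j) P = eval z P₀ := by
    intro z
    rw [eval_eq' _ P, hP₀, map_sum]
    have key : ∀ s ∈ P.support, coeff s P * ∏ j, (if j = i then (0:F) else z j) ^ s j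
        = if s i = 0 then coeff s P * ∏ j, z j ^ s j else 0 := by
      intro s _
      by_cases h : s i = 0
      · simp only [h, if_true]
        congr 1
        refine Finset.prod_congr rfl fun j _ => ?_
        by_cases hj : j = i
        · subst hj; rw [h]; simp
        · simp [hj]
      · rw [if_neg h]
        have : (if i = i then (0:F) else z i) ^ s i = 0 := by
          simp [pow_eq_zero_iff, h]
        rw [Finset.prod_eq_zero (Finset.mem_univ i) this, mul_zero]
    rw [Finset.sum_congr rfl key, ← Finset.sum_filter]
    refine Finset.sum_congr rfl fun s hs => ?_
    rw [eval_monomial, Finsupp.prod_pow]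
  -- find a point where the restriction is nonconstant
  have hy : ∃ y : Fin n → F,
      NonConstantFn (fun t => eval (fun j => if j = i then t else y j) P) := by
    by_contra hcon
    push_neg at hcon
    simp only [NonConstantFn, not_not] at hcon
    have hconst : ∀ (y : Fin n → F) (t : F),
        eval (fun j => if j = i then t else y j) P = eval y P := by
      intro y t
      obtain ⟨c, hc⟩ := hcon y
      have h1 := hc t
      have h2 := hc (y i)
      have : (fun j => if j = i then y i else y j) = y := by
        funext j; by_cases hj : j = i <;> simp [hj]
      rw [this] at h2
      rw [h1, h2]
    have hzero : ∀ z : Fin n → F, eval z (P - P₀) = 0 := by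
      intro z
      rw [map_sub, ← eval_P₀ z, hconst z 0, sub_self]
    have hmem : P - P₀ ∈ restrictDegree (Fin n) F (q - 1) := by
      rw [mem_restrictDegree]
      intro s hs j
      have hs' : coeff s P ≠ 0 := by
        intro h0
        have : coeff s P₀ = 0 := by rw [coeff_P₀]; split <;> simp [h0]
        exact (MvPolynomial.mem_support_iff.mp hs) (by rw [coeff_sub, h0, this, sub_zero])
      exact le_trans (MvPolynomial.degreeOf_le_iff.mp (le_refl (P.degreeOf j)) s
        (MvPolynomial.mem_support_iff.mpr hs')) (hP j)
    have : P - P₀ = 0 := MvPolynomial.eq_zero_of_eval_eq_zero (Fin n) F _ hzero hmem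
    have hPP₀ : P = P₀ := by linear_combination this
    have : P.degreeOf i = 0 := by
      refine Nat.le_zero.mp (MvPolynomial.degreeOf_le_iff.mpr fun m hm => ?_)
      rw [hPP₀] at hm
      have := MvPolynomial.mem_support_iff.mp hm
      rw [coeff_P₀] at this
      by_contra hne
      simp only [if_neg (by omega : ¬ m i = 0)] at this
      exact this rfl
    omega
  obtain ⟨y, hy⟩ := hy
  set u : F → F := fun t => eval (fun j => if j = i then t else y j) P with hu
  -- the univariate representative
  set p : Polynomial F :=
    eval₂ Polynomial.C (fun j => if j = i then Polynomial.X else Polynomial.C (y j)) P with hp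
  have hpeval : ∀ t, p.eval t = u t := by
    intro t
    rw [hp, ← Polynomial.coe_evalRingHom, eval₂_comp_left]
    rw [hu]
    congr 1
    · ext x; simp
    · funext j; by_cases hj : j = i <;> simp [hj]
  have hpdeg : p.natDegree ≤ P.degreeOf i := by
    rw [hp, eval₂_eq]
    refine Polynomial.natDegree_sum_le_of_forall_le _ _ fun s hs => ?_
    refine le_trans (Polynomial.natDegree_mul_le) ?_
    rw [Polynomial.natDegree_C, zero_add]
    refine le_trans (Polynomial.natDegree_prod_le _ _) ?_
    calc ∑ j ∈ s.support, ((if j = i then Polynomial.X else Polynomial.C (y j)) ^ s j).natDegree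
        ≤ ∑ j ∈ s.support, (if j = i then s j else 0) := by
          refine Finset.sum_le_sum fun j _ => ?_
          by_cases hj : j = i
          · simp [hj, Polynomial.natDegree_X_pow]
          · simp only [if_neg hj]
            rw [← Polynomial.C_pow, Polynomial.natDegree_C]
      _ = if i ∈ s.support then s i else 0 := Finset.sum_ite_eq' s.support i (fun j => s j)
      _ ≤ s i := by split <;> omega
      _ ≤ P.degreeOf i := MvPolynomial.degreeOf_le_iff.mp (le_refl _) s hs
  have hdegU : degU F u ≤ P.degreeOf i := by
    refine le_trans (Nat.sInf_le ⟨p, le_trans hpdeg (hP i), hpeval, rfl⟩) hpdeg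
  have hmem' : ((degU F u : ℕ) : ℕ∞) ∈ {d : ℕ∞ | ∃ u : F → F, NonConstantFn u ∧
      Set.range u ⊆ Set.range (fun x => MvPolynomial.eval x P) ∧ d = ((degU F u : ℕ) : ℕ∞)} :=
    ⟨u, hy, by rintro _ ⟨t, rfl⟩; exact ⟨fun j => if j = i then t else y j, rfl⟩, rfl⟩
  calc udeg1 F (fun x => MvPolynomial.eval x P) ≤ ((degU F u : ℕ) : ℕ∞) := sInf_le hmem'
    _ ≤ (P.degreeOf i : ℕ∞) := by exact_mod_cast hdegU


end PaperDefs
end
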